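/- Let α_1, …, α_n < 0 with α_0 = −(1/2)Σ_j α_j, and suppose α is ℓ-strictly short. Then for the polygon quiver (central dimension 2, n outer dimensions 1), any subrepresentation dimension vector v' with v'_0 = 1 and outer support J satisfying slope_α(Q, v') ≥ slope_α(Q, v) must have |J| > ℓ, and consequently dim_ℝ Hom^1(π, π^⊥) − dim_ℝ Hom^0(π, π^⊥) = 2|J| − 2 ≥ 2ℓ. -/
import Mathlib


/-- If `α` is `ℓ`-strictly short, then any destabilising subrepresentation of
the polygon quiver with `v'₀ = 1` and outer support `J` (i.e. satisfying
`slope_α(Q,v') ≥ slope_α(Q,v) = 0`) has `|J| > ℓ`, and consequently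
`dim_ℝ Hom¹ − dim_ℝ Hom⁰ = 2|J| − 2 ≥ 2ℓ`. -/
theorem polygon_ell_strictly_short_bound (n ℓ : ℕ) (hℓ : 1 ≤ ℓ) (hℓn : ℓ ≤ n)
    (α : Fin n → ℝ) (hα : ∀ j, α j < 0)
    (α₀ : ℝ) (hα₀ : α₀ = -(1 / 2) * ∑ j, α j)
    (hshort : ∀ J : Finset (Fin n), J.card = ℓ → -α₀ - ∑ j ∈ J, α j < 0) :
    ∀ J : Finset (Fin n),
      (-α₀ - ∑ j ∈ J, α j) / (1 + (J.card : ℝ)) ≥ 0 →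
        ℓ < J.card ∧ 2 * (J.card : ℤ) - 2 ≥ 2 * (ℓ : ℤ) := by
  intro J hslope
  have hden : (0:ℝ) < 1 + (J.card : ℝ) := by positivity
  have hnum : 0 ≤ -α₀ - ∑ j ∈ J, α j := by
    by_contra h
    push_neg at h
    have := div_neg_of_neg_of_pos h hden
    linarith
  have hcard : ℓ < J.card := by
    by_contra h
    push_neg at h
    obtain ⟨K, hJK, _, hKcard⟩ := Finset.exists_subsuperset_card_eq (J.subset_univ)
      h (by simpa using hℓn)
    have hsub : ∑ j ∈ K, α j ≤ ∑ j ∈ J, α j := by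
      have := Finset.sum_sdiff hJK (f := α)
      have hneg : ∑ j ∈ K \ J, α j ≤ 0 :=
        Finset.sum_nonpos fun j _ => (hα j).le
      linarith
    have := hshort K hKcard
    linarith
  refine ⟨hcard, ?_⟩
  have : (ℓ:ℤ) < (J.card : ℤ) := by exact_mod_cast hcard
  omega
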